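/- Let X be a Hausdorff topological space, T ⊆ ℝⁿ a subset, Ψ : X → T a continuous proper map, and w₀ ∈ T. Suppose every point of Ψ⁻¹(w₀) has a connected open neighbourhood in Ψ⁻¹(w₀) with respect to the relative topology. Then there exists ε > 0 such that whenever [x] and [y] are distinct connected components of Ψ⁻¹(w₀), the sets U_{[x],ε} and U_{[y],ε} are disjoint, where U_{[x],ε} denotes the connected component of x in Ψ⁻¹(B(w₀,ε)). -/

import Mathlib

open Set Metric Filter Topology

/-- A path `c : ℝ → ℝⁿ`, considered on `[0,1]`, is *monotone straight* if either it is
constant, or its image is the segment `[c 0, c 1]` and it parametrizes this segment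
weakly monotonically. -/
def MonotoneStraight {n : ℕ} (c : ℝ → EuclideanSpace ℝ (Fin n)) : Prop :=
  (∀ t ∈ Set.Icc (0:ℝ) 1, c t = c 0) ∨
  ((c '' Set.Icc (0:ℝ) 1 = segment ℝ (c 0) (c 1)) ∧
   ∀ t₁ t₂ t₃ : ℝ, 0 ≤ t₁ → t₁ < t₂ → t₂ < t₃ → t₃ ≤ 1 →
     c t₂ ∈ segment ℝ (c t₁) (c t₃))

/-- The restriction of `Ψ` to `U` is a *convex map*: any two points of `U` are joined by a
continuous path in `U` whose composition with `Ψ` is monotone straight. -/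
def IsConvexMapOn {n : ℕ} {X : Type*} [TopologicalSpace X]
    (Ψ : X → EuclideanSpace ℝ (Fin n)) (U : Set X) : Prop :=
  ∀ x₀ ∈ U, ∀ x₁ ∈ U, ∃ γ : ℝ → X,
    ContinuousOn γ (Set.Icc 0 1) ∧ (∀ t ∈ Set.Icc (0:ℝ) 1, γ t ∈ U) ∧
    γ 0 = x₀ ∧ γ 1 = x₁ ∧ MonotoneStraight (Ψ ∘ γ)

/-- The restriction `Ψ|_U : U → Ψ(U)` is an open map onto its image: the image of every
relatively open subset of `U` is relatively open in `Ψ(U)`. -/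
def IsOpenOnto {n : ℕ} {X : Type*} [TopologicalSpace X]
    (Ψ : X → EuclideanSpace ℝ (Fin n)) (U : Set X) : Prop :=
  ∀ O : Set X, IsOpen O → ∃ V : Set (EuclideanSpace ℝ (Fin n)),
    IsOpen V ∧ Ψ '' (O ∩ U) = V ∩ Ψ '' U

/-- The `Ψ`-distance: the infimum of the lengths (total variations) of `Ψ ∘ γ` over all
continuous paths `γ` in `X` from `x₀` to `x₁`; takes values in `[0,∞]`. -/
noncomputable def psiDist {n : ℕ} {X : Type*} [TopologicalSpace X]
    (Ψ : X → EuclideanSpace ℝ (Fin n)) (x₀ x₁ : X) : ENNReal :=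
  ⨅ γ ∈ {γ : ℝ → X | ContinuousOn γ (Set.Icc 0 1) ∧ γ 0 = x₀ ∧ γ 1 = x₁},
    eVariationOn (Ψ ∘ γ) (Set.Icc 0 1)

/-! Each point of the compact fibre `K = Ψ⁻¹(w₀)` has a neighbourhood in `K` inside its own
component, so the components of `K` are relatively open: there are finitely many, and each
component `C` and its complement `K \ C` are compact. Separating every `C` from `K \ C` by
disjoint open sets `V_C`, `W_C` and intersecting the finitely many `V_C ∪ W_C` gives an open
`U ⊇ K` in which points of different components of `K` lie in different components of `U`.
Properness makes `Ψ : X → T` a closed map, so `Ψ⁻¹(B(w₀, ε)) ⊆ U` for small `ε`. -/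

section ComponentsOfCompact

variable {X : Type*} [TopologicalSpace X] {K : Set X}

theorem inter_closure_connectedComponentIn (K : Set X) (x : X) :
    K ∩ closure (connectedComponentIn K x) = connectedComponentIn K x := by
  refine Subset.antisymm ?_ (subset_inter (connectedComponentIn_subset K x) subset_closure)
  by_cases hx : x ∈ K
  · exact (isPreconnected_connectedComponentIn.subset_closure
      (subset_inter (connectedComponentIn_subset K x) subset_closure) inter_subset_right
      ).subset_connectedComponentIn ⟨hx, subset_closure (mem_connectedComponentIn hx)⟩
      inter_subset_left
  · simp [connectedComponentIn_eq_empty hx]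

theorem connectedComponentIn_mem_nhdsWithin {O : Set X} {x : X} (hO : IsOpen O) (hxO : x ∈ O)
    (hx : x ∈ K) (hOK : IsPreconnected (O ∩ K)) : connectedComponentIn K x ∈ 𝓝[K] x :=
  mem_nhdsWithin.2 ⟨O, hO, hxO, hOK.subset_connectedComponentIn ⟨hxO, hx⟩ inter_subset_right⟩

theorem IsCompact.isCompact_connectedComponentIn (hK : IsCompact K) (x : X) :
    IsCompact (connectedComponentIn K x) := by
  rw [← inter_closure_connectedComponentIn]
  exact hK.inter_right isClosed_closure

theorem exists_isOpen_inter_eq_connectedComponentIn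
    (hK : ∀ x ∈ K, connectedComponentIn K x ∈ 𝓝[K] x) (x : X) :
    ∃ G, IsOpen G ∧ K ∩ G = connectedComponentIn K x := by
  have hnhds : ∀ y ∈ connectedComponentIn K x,
      ∃ u, IsOpen u ∧ y ∈ u ∧ u ∩ K ⊆ connectedComponentIn K x := fun y hy ↦ by
    rw [connectedComponentIn_eq hy]
    exact mem_nhdsWithin.1 (hK y (connectedComponentIn_subset K x hy))
  choose! u hu hyu huK using hnhds
  refine ⟨⋃ y ∈ connectedComponentIn K x, u y, isOpen_biUnion hu, Subset.antisymm ?_ ?_⟩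
  · rintro z ⟨hzK, hz⟩
    obtain ⟨y, hy, hzy⟩ := mem_iUnion₂.1 hz
    exact huK y hy ⟨hzy, hzK⟩
  · exact fun z hz ↦ ⟨connectedComponentIn_subset K x hz, mem_biUnion hz (hyu z hz)⟩

theorem IsCompact.diff_connectedComponentIn (hKc : IsCompact K)
    (hK : ∀ x ∈ K, connectedComponentIn K x ∈ 𝓝[K] x) (x : X) :
    IsCompact (K \ connectedComponentIn K x) := by
  obtain ⟨G, hG, hGK⟩ := exists_isOpen_inter_eq_connectedComponentIn hK x
  rw [← hGK, sdiff_self_inter]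
  exact hKc.diff hG

theorem IsCompact.finite_image_connectedComponentIn (hKc : IsCompact K)
    (hK : ∀ x ∈ K, connectedComponentIn K x ∈ 𝓝[K] x) :
    (connectedComponentIn K '' K).Finite := by
  obtain ⟨t, -, hcover⟩ := hKc.elim_nhdsWithin_subcover (connectedComponentIn K) hK
  refine (t.finite_toSet.image (connectedComponentIn K)).subset ?_
  rintro _ ⟨z, hz, rfl⟩
  obtain ⟨i, hi, hzi⟩ := mem_iUnion₂.1 (hcover hz)
  exact ⟨i, hi, connectedComponentIn_eq hzi⟩

theorem connectedComponentIn_subset_of_subset_union {U V W : Set X} (hV : IsOpen V)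
    (hW : IsOpen W) (hVW : Disjoint V W) (hU : U ⊆ V ∪ W) {x : X} (hx : x ∈ U) (hxV : x ∈ V) :
    connectedComponentIn U x ⊆ V :=
  isPreconnected_connectedComponentIn.subset_left_of_subset_union hV hW hVW
    ((connectedComponentIn_subset U x).trans hU) ⟨x, mem_connectedComponentIn hx, hxV⟩

theorem IsCompact.exists_isOpen_disjoint_connectedComponentIn [T2Space X] (hKc : IsCompact K)
    (hK : ∀ x ∈ K, connectedComponentIn K x ∈ 𝓝[K] x) :
    ∃ U, IsOpen U ∧ K ⊆ U ∧ ∀ x ∈ K, ∀ y ∈ K,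
      connectedComponentIn K x ≠ connectedComponentIn K y →
      Disjoint (connectedComponentIn U x) (connectedComponentIn U y) := by
  set S := connectedComponentIn K '' K
  have hsep : ∀ C ∈ S, SeparatedNhds C (K \ C) := by
    rintro _ ⟨x, -, rfl⟩
    exact SeparatedNhds.of_isCompact_isCompact (hKc.isCompact_connectedComponentIn x)
      (hKc.diff_connectedComponentIn hK x) disjoint_sdiff_right
  choose! V W hV hW hCV hCW hVW using hsep
  set U := ⋂ C ∈ S, V C ∪ W C
  have hKU : K ⊆ U := fun z hz ↦ mem_iInter₂.2 fun C hC ↦ by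
    by_cases hzC : z ∈ C
    · exact Or.inl (hCV C hC hzC)
    · exact Or.inr (hCW C hC ⟨hz, hzC⟩)
  refine ⟨U, (hKc.finite_image_connectedComponentIn hK).isOpen_biInter
    fun C hC ↦ (hV C hC).union (hW C hC), hKU, fun x hx y hy hxy ↦ ?_⟩
  set C := connectedComponentIn K x
  have hC : C ∈ S := mem_image_of_mem _ hx
  have hUVW : U ⊆ V C ∪ W C := biInter_subset_of_mem hC
  have hyC : y ∈ K \ C := ⟨hy, fun h ↦ hxy (connectedComponentIn_eq h)⟩
  exact (hVW C hC).mono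
    (connectedComponentIn_subset_of_subset_union (hV C hC) (hW C hC) (hVW C hC) hUVW (hKU hx)
      (hCV C hC (mem_connectedComponentIn hx)))
    (connectedComponentIn_subset_of_subset_union (hW C hC) (hV C hC) (hVW C hC).symm
      (hUVW.trans_eq (union_comm _ _)) (hKU hy) (hCW C hC hyC))

end ComponentsOfCompact

section ProperMaps

variable {X Y : Type*} [TopologicalSpace X] [TopologicalSpace Y] {f : X → Y} {T : Set Y}

theorem isProperMap_codRestrict_of_isCompact_preimage [T2Space Y] [FirstCountableTopology Y]
    (hf : Continuous f) (hfT : ∀ x, f x ∈ T)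
    (hproper : ∀ L ⊆ T, IsCompact L → IsCompact (f ⁻¹' L)) :
    IsProperMap (codRestrict f T hfT) := by
  refine isProperMap_iff_isCompact_preimage.2 ⟨hf.codRestrict hfT, fun L hL ↦ ?_⟩
  have hpre : f ⁻¹' (Subtype.val '' L) = codRestrict f T hfT ⁻¹' L :=
    congrArg (codRestrict f T hfT ⁻¹' ·) (preimage_image_eq L Subtype.val_injective)
  exact hpre ▸ hproper _ (Subtype.coe_image_subset T L) (hL.image continuous_subtype_val)

theorem exists_mem_nhds_preimage_subset_of_isProperMap_codRestrict (hfT : ∀ x, f x ∈ T)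
    (hg : IsProperMap (codRestrict f T hfT)) {y : Y} (hy : y ∈ T) {U : Set X} (hU : IsOpen U)
    (hyU : f ⁻¹' {y} ⊆ U) : ∃ V ∈ 𝓝 y, f ⁻¹' V ⊆ U := by
  have hfiber : codRestrict f T hfT ⁻¹' {⟨y, hy⟩} ⊆ U :=
    fun x hx ↦ hyU (congrArg Subtype.val hx)
  have hUg : U ∈ comap (codRestrict f T hfT) (𝓝 ⟨y, hy⟩) :=
    hg.isClosedMap.comap_nhds_le (hU.mem_nhdsSet.2 hfiber)
  rwa [nhds_subtype, comap_comap] at hUg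

end ProperMaps

/-- For a proper map whose level set is locally connected (in the relative topology), for
small ε distinct components of the level set lie in disjoint components of the preimage of
the ε-ball. -/
theorem exists_eps_disjoint_components {n : ℕ} {X : Type*} [TopologicalSpace X] [T2Space X]
    (T : Set (EuclideanSpace ℝ (Fin n)))
    (Ψ : X → EuclideanSpace ℝ (Fin n)) (hcont : Continuous Ψ) (hmem : ∀ x, Ψ x ∈ T)
    (hproper : ∀ K : Set (EuclideanSpace ℝ (Fin n)), K ⊆ T → IsCompact K →
      IsCompact (Ψ ⁻¹' K))
    (w₀ : EuclideanSpace ℝ (Fin n)) (hw₀ : w₀ ∈ T)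
    (hnbhd : ∀ x ∈ Ψ ⁻¹' {w₀}, ∃ O : Set X, IsOpen O ∧ x ∈ O ∧
      IsConnected (O ∩ Ψ ⁻¹' {w₀})) :
    ∃ ε > (0:ℝ), ∀ x ∈ Ψ ⁻¹' {w₀}, ∀ y ∈ Ψ ⁻¹' {w₀},
      connectedComponentIn (Ψ ⁻¹' {w₀}) x ≠ connectedComponentIn (Ψ ⁻¹' {w₀}) y →
      Disjoint (connectedComponentIn (Ψ ⁻¹' (Metric.ball w₀ ε)) x)
        (connectedComponentIn (Ψ ⁻¹' (Metric.ball w₀ ε)) y) := by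
  have hKc : IsCompact (Ψ ⁻¹' {w₀}) := hproper _ (singleton_subset_iff.2 hw₀) isCompact_singleton
  have hK : ∀ x ∈ Ψ ⁻¹' {w₀}, connectedComponentIn (Ψ ⁻¹' {w₀}) x ∈ 𝓝[Ψ ⁻¹' {w₀}] x := by
    intro x hx
    obtain ⟨O, hO, hxO, hOconn⟩ := hnbhd x hx
    exact connectedComponentIn_mem_nhdsWithin hO hxO hx hOconn.isPreconnected
  obtain ⟨U, hU, hKU, hdisj⟩ := hKc.exists_isOpen_disjoint_connectedComponentIn hK
  obtain ⟨V, hV, hVU⟩ := exists_mem_nhds_preimage_subset_of_isProperMap_codRestrict hmem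
    (isProperMap_codRestrict_of_isCompact_preimage hcont hmem hproper) hw₀ hU hKU
  obtain ⟨ε, hε, hball⟩ := Metric.mem_nhds_iff.1 hV
  have hballU : Ψ ⁻¹' ball w₀ ε ⊆ U := (preimage_mono hball).trans hVU
  exact ⟨ε, hε, fun x hx y hy hxy ↦ (hdisj x hx y hy hxy).mono
    (connectedComponentIn_mono x hballU) (connectedComponentIn_mono y hballU)⟩
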